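/- With the setup described in the context, suppose moreover that v, m ∈ ℤ^N and a ∈ ℤ^r satisfy ⟨v,u_i⟩ + a_i = 0 for i = 1,…,N and ⟨m,u_i⟩ + a_i ≥ 0 for all i = 1,…,r, and let y ∈ (Kˣ)^k be such that every coordinate of y^{L2} lies in the image of F under the inclusion F ⊆ K. Then the evaluation ∏_{i=1}^r (x(y)_i)^{⟨m,u_i⟩+a_i} (computed in K with the convention 0^0 = 1) lies in the image of F in K. (Paper: Corollary 3.16 'EvRat': the evaluation of a monomial χ^{⟨m,P⟩} at a normalized representative of an F_q-rational point belongs to F_q.) -/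

import Mathlib

/-!
The exponents `⟨m, u_i⟩ + a_i` are `⟨m - v, u_i⟩` on the first `N` rows, i.e. the entries of
`A' (m - v) = H s` with `s = T⁻¹ (m - v)`. If one of the first `N - k` exponents is nonzero the
evaluation is `0`. Otherwise, `H` being lower triangular with nonzero diagonal, `s` vanishes on its
first `N - k` coordinates, so the middle exponents are `L2 s'` for the tail `s'` of `s`, while the
last `r - N` coordinates of `x(y)` are `1`. The evaluation is then `y^{L2 s'} = (y^{L2})^{s'}`,
a product of powers of elements of `F`.
-/

/-- The `N×N` submatrix of an `r×N` matrix formed by its first `N` rows. -/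
def firstRows {r N : ℕ} (hNr : N ≤ r) (A : Matrix (Fin r) (Fin N) ℤ) :
    Matrix (Fin N) (Fin N) ℤ :=
  Matrix.of fun i j => A ⟨(i : ℕ), by have := i.isLt; omega⟩ j

/-- The `k×k` bottom-right block of an `N×N` matrix (rows and columns
`N-k+1, …, N`). -/
def lowerRight {N k : ℕ} (hkN : k ≤ N) (H : Matrix (Fin N) (Fin N) ℤ) :
    Matrix (Fin k) (Fin k) ℤ :=
  Matrix.of fun i j =>
    H ⟨N - k + (i : ℕ), by have := i.isLt; omega⟩
      ⟨N - k + (j : ℕ), by have := j.isLt; omega⟩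

/-- The `v`-normalized tuple `x(y) ∈ K^r` attached to `y ∈ (Kˣ)^k`. -/
def xvec {K : Type*} [Field K] {k N r : ℕ} (hkN : k ≤ N) (hNr : N ≤ r)
    (y : Fin k → Kˣ) : Fin r → K :=
  fun i =>
    if h1 : (i : ℕ) < N - k then 0
    else if h2 : (i : ℕ) < N then (y ⟨(i : ℕ) - (N - k), by omega⟩ : K)
    else 1

open Matrix

theorem Finset.prod_zpow_eq_zpow_sum {G ι : Type*} [CommGroup G] (s : Finset ι) (f : ι → ℤ)
    (a : G) : ∏ i ∈ s, a ^ f i = a ^ ∑ i ∈ s, f i := by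
  have := map_prod (zpowersHom G a) (fun i => Multiplicative.ofAdd (f i)) s
  rw [← ofAdd_sum] at this
  simpa only [zpowersHom_apply, toAdd_ofAdd] using this.symm

theorem prod_zpow_mulVec {G ι κ : Type*} [CommGroup G] [Fintype ι] [Fintype κ]
    (y : ι → G) (L : Matrix ι κ ℤ) (s : κ → ℤ) :
    ∏ i, y i ^ (L *ᵥ s) i = ∏ j, (∏ i, y i ^ L i j) ^ s j := by
  simp only [mulVec, dotProduct, ← Finset.prod_zpow_eq_zpow_sum, _root_.zpow_mul, ← Finset.prod_zpow]
  exact Finset.prod_comm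

theorem Matrix.IsLowerTriangular.eq_zero_of_mulVec_eq_zero {ι R : Type*} [LinearOrder ι]
    [Fintype ι] [CommRing R] [IsDomain R] {H : Matrix ι ι R} (hH : H.IsLowerTriangular)
    (hdet : H.det ≠ 0) {S : Set ι} (hS : IsLowerSet S) {s : ι → R}
    (hHs : ∀ i ∈ S, (H *ᵥ s) i = 0) : ∀ i ∈ S, s i = 0 := by
  classical
  have hdiag : ∀ i, H i i ≠ 0 := by
    rw [det_of_isLowerTriangular H hH, Finset.prod_ne_zero_iff] at hdet
    exact fun i => hdet i (Finset.mem_univ i)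
  intro i
  induction i using WellFoundedLT.induction with
  | _ i ih =>
    intro hi
    have hdiagonal : (H *ᵥ s) i = H i i * s i := by
      refine Finset.sum_eq_single i (fun j _ hji => ?_) (by simp)
      rcases hji.lt_or_gt with hji | hji
      · rw [ih j hji (hS hji.le hi), mul_zero]
      · exact mul_eq_zero_of_left (hH hji) _
    exact (mul_eq_zero.mp (hdiagonal ▸ hHs i hi)).resolve_left (hdiag i)

section Blocks

variable {k N r : ℕ}

def bottomIndex (hkN : k ≤ N) (j : Fin k) : Fin N :=
  ⟨N - k + j, by omega⟩

theorem bottomIndex_injective (hkN : k ≤ N) : Function.Injective (bottomIndex hkN) :=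
  fun a b hab => Fin.ext (by have := congrArg Fin.val hab; simp [bottomIndex] at this; omega)

theorem mem_range_bottomIndex (hkN : k ≤ N) {i : Fin N} (hi : N - k ≤ i) :
    i ∈ Set.range (bottomIndex hkN) :=
  ⟨⟨i - (N - k), by omega⟩, Fin.ext (by simp [bottomIndex]; omega)⟩

theorem mulVec_bottomIndex (hkN : k ≤ N) (H : Matrix (Fin N) (Fin N) ℤ) {s : Fin N → ℤ}
    (hs : ∀ i : Fin N, (i : ℕ) < N - k → s i = 0) (j : Fin k) :
    (H *ᵥ s) (bottomIndex hkN j) = (lowerRight hkN H *ᵥ (s ∘ bottomIndex hkN)) j := by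
  refine (Fintype.sum_of_injective _ (bottomIndex_injective hkN) _ _ (fun i hi => ?_)
    (fun _ => rfl)).symm
  rw [hs i (by_contra fun h => hi (mem_range_bottomIndex hkN (not_lt.mp h))), mul_zero]

theorem firstRows_mul_mulVec_inv_mulVec (hNr : N ≤ r) (A : Matrix (Fin r) (Fin N) ℤ)
    {T : Matrix (Fin N) (Fin N) ℤ} (hT : IsUnit T.det) {v : Fin N → ℤ} (m : Fin N → ℤ)
    {a : Fin r → ℤ} (hv : ∀ i : Fin r, (i : ℕ) < N → (∑ j : Fin N, v j * A i j) + a i = 0)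
    (i : Fin N) :
    ((firstRows hNr A * T) *ᵥ (T⁻¹ *ᵥ (m - v))) i
      = (∑ j : Fin N, m j * A (Fin.castLE hNr i) j) + a (Fin.castLE hNr i) := by
  have hvi := hv (Fin.castLE hNr i) i.isLt
  rw [mulVec_mulVec, Matrix.mul_assoc, mul_nonsing_inv T hT, Matrix.mul_one]
  simp only [mulVec, dotProduct, firstRows, of_apply, Pi.sub_apply, mul_sub,
    Finset.sum_sub_distrib]
  simp only [Fin.castLE, mul_comm (A _ _)] at hvi ⊢
  linarith

variable {K : Type*} [Field K] (hkN : k ≤ N) (hNr : N ≤ r) (y : Fin k → Kˣ)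

theorem xvec_of_lt {i : Fin r} (hi : (i : ℕ) < N - k) : xvec hkN hNr y i = 0 := by
  simp [xvec, hi]

theorem xvec_of_le {i : Fin r} (hi : N ≤ (i : ℕ)) : xvec hkN hNr y i = 1 := by
  simp [xvec, show ¬ (i : ℕ) < N - k by omega, show ¬ (i : ℕ) < N by omega]

theorem xvec_castLE_bottomIndex (j : Fin k) :
    xvec hkN hNr y (Fin.castLE hNr (bottomIndex hkN j)) = y j := by
  simp [xvec, bottomIndex, show N - k + (j : ℕ) < N by omega]

theorem prod_xvec_pow_eq_zero {e : Fin r → ℕ} {i : Fin r} (hi : (i : ℕ) < N - k) (he : e i ≠ 0) :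
    ∏ i, xvec hkN hNr y i ^ e i = 0 :=
  Finset.prod_eq_zero (Finset.mem_univ i) (by rw [xvec_of_lt hkN hNr y hi, zero_pow he])

theorem prod_xvec_pow {e : Fin r → ℕ} (he : ∀ i : Fin r, (i : ℕ) < N - k → e i = 0) :
    ∏ i, xvec hkN hNr y i ^ e i
      = ∏ j, (y j : K) ^ e (Fin.castLE hNr (bottomIndex hkN j)) := by
  refine (Fintype.prod_of_injective _ ((Fin.castLE_injective hNr).comp (bottomIndex_injective hkN))
    _ _ (fun i hi => ?_) (fun j => by rw [Function.comp_apply, xvec_castLE_bottomIndex])).symm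
  rcases lt_or_ge (i : ℕ) (N - k) with hlt | hge
  · rw [he i hlt, pow_zero]
  rcases lt_or_ge (i : ℕ) N with hlt | hge'
  · obtain ⟨j, hj⟩ := mem_range_bottomIndex hkN (i := ⟨i, hlt⟩) hge
    exact absurd ⟨j, by simp [hj]⟩ hi
  · rw [xvec_of_le hkN hNr y hge', one_pow]

end Blocks

theorem stmt_9_general {F K : Type*} [Field F] [Field K] [Algebra F K]
    {k N r : ℕ}
    (hkN : k ≤ N) (hNr : N ≤ r)
    (A : Matrix (Fin r) (Fin N) ℤ)
    (T : Matrix (Fin N) (Fin N) ℤ) (hT : IsUnit T.det)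
    (hlow : ∀ i j : Fin N, (i : ℕ) < (j : ℕ) → (firstRows hNr A * T) i j = 0)
    (hdet : (firstRows hNr A).det ≠ 0)
    (v m : Fin N → ℤ) (a : Fin r → ℤ)
    (hv : ∀ i : Fin r, (i : ℕ) < N → (∑ j : Fin N, v j * A i j) + a i = 0)
    (hm : ∀ i : Fin r, 0 ≤ (∑ j : Fin N, m j * A i j) + a i)
    (y : Fin k → Kˣ)
    (hy : ∀ j : Fin k,
      ((∏ i : Fin k, y i ^ lowerRight hkN (firstRows hNr A * T) i j : Kˣ) : K)
        ∈ Set.range (algebraMap F K)) :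
    (∏ i : Fin r, (xvec hkN hNr y i) ^ ((∑ j : Fin N, m j * A i j) + a i).toNat)
      ∈ Set.range (algebraMap F K) := by
  set E : Fin r → ℤ := fun i => (∑ j : Fin N, m j * A i j) + a i
  by_cases hzero : ∃ i : Fin r, (i : ℕ) < N - k ∧ E i ≠ 0
  · obtain ⟨i, hi, hEi⟩ := hzero
    have hpos : 0 < (E i).toNat := Int.lt_toNat.mpr ((hm i).lt_of_ne hEi.symm)
    exact ⟨0, by rw [map_zero, prod_xvec_pow_eq_zero hkN hNr y hi hpos.ne']⟩
  push Not at hzero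
  set H := firstRows hNr A * T
  set s := T⁻¹ *ᵥ (m - v)
  have hHs (i : Fin N) : (H *ᵥ s) i = E (Fin.castLE hNr i) :=
    firstRows_mul_mulVec_inv_mulVec hNr A hT m hv i
  have hHlow : H.IsLowerTriangular := fun i j hij => hlow i j hij
  have hHdet : H.det ≠ 0 := by
    rw [det_mul]
    exact mul_ne_zero hdet hT.ne_zero
  have hs : ∀ i : Fin N, (i : ℕ) < N - k → s i = 0 :=
    hHlow.eq_zero_of_mulVec_eq_zero hHdet (S := {i | (i : ℕ) < N - k})
      (fun _ _ hij hi => (Fin.le_iff_val_le_val.mp hij).trans_lt hi)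
      (fun i hi => (hHs i).trans (hzero _ hi))
  choose f hf using hy
  refine ⟨∏ j, f j ^ (s ∘ bottomIndex hkN) j, ?_⟩
  rw [prod_xvec_pow hkN hNr y fun i hi => Int.toNat_eq_zero.mpr (hzero i hi).le]
  calc algebraMap F K (∏ j, f j ^ (s ∘ bottomIndex hkN) j)
      = ((∏ j, (∏ i, y i ^ lowerRight hkN H i j) ^ (s ∘ bottomIndex hkN) j : Kˣ) : K) := by
        simp [map_prod, map_zpow₀, hf, Units.val_zpow_eq_zpow_val]
    _ = ((∏ j, y j ^ E (Fin.castLE hNr (bottomIndex hkN j)) : Kˣ) : K) := by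
        rw [← prod_zpow_mulVec]
        simp only [← mulVec_bottomIndex hkN H hs, hHs]
    _ = ∏ j, (y j : K) ^ (E (Fin.castLE hNr (bottomIndex hkN j))).toNat := by
        push_cast
        refine Finset.prod_congr rfl fun j _ => ?_
        rw [← zpow_natCast, Int.toNat_of_nonneg (hm _)]

/-- Corollary 3.16 'EvRat': the evaluation of a monomial
`χ^{⟨m,P⟩}` at the `v`-normalized tuple `x(y)` of an `F_q`-rational point
(i.e. all coordinates of `y^{L2}` lie in `F`) belongs to the image of `F`. -/
theorem stmt_9 {F K : Type*} [Field F] [Fintype F] [Field K] [Algebra F K]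
    [IsAlgClosure F K] {k N r : ℕ}
    (hk : 0 < k) (hkN : k ≤ N) (hNr : N ≤ r)
    (A : Matrix (Fin r) (Fin N) ℤ)
    (T : Matrix (Fin N) (Fin N) ℤ) (hT : IsUnit T.det)
    (hlow : ∀ i j : Fin N, (i : ℕ) < (j : ℕ) → (firstRows hNr A * T) i j = 0)
    (hdet : (firstRows hNr A).det ≠ 0)
    (hchar : ∀ p : ℕ, 0 < p → CharP K p → ¬ ((p : ℤ) ∣ (firstRows hNr A).det))
    (v m : Fin N → ℤ) (a : Fin r → ℤ)
    (hv : ∀ i : Fin r, (i : ℕ) < N → (∑ j : Fin N, v j * A i j) + a i = 0)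
    (hm : ∀ i : Fin r, 0 ≤ (∑ j : Fin N, m j * A i j) + a i)
    (y : Fin k → Kˣ)
    (hy : ∀ j : Fin k,
      ((∏ i : Fin k, y i ^ lowerRight hkN (firstRows hNr A * T) i j : Kˣ) : K)
        ∈ Set.range (algebraMap F K)) :
    (∏ i : Fin r, (xvec hkN hNr y i) ^ ((∑ j : Fin N, m j * A i j) + a i).toNat)
      ∈ Set.range (algebraMap F K) :=
  stmt_9_general hkN hNr A T hT hlow hdet v m a hv hm y hy
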